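/- arXiv:1302.5202 — 2 statements merged into one kernel-verified Lean document; each statement's English description precedes it below -/
import Mathlib

section
/- Let E be a measurable space, let F¹ and F² be (σ-finite) measures on E, let β ∈ [0,2], and let ψ : E → [0,∞) be a measurable function such that ∫_E ψ(x)^β F^l(dx) < ∞ and F^l({x : ψ(x) = 0}) = 0 for l = 1,2. Define φ_β(ε) := Σ_{l=1,2} ∫_{{x : ψ(x) ≤ ε}} ψ(x)^β F^l(dx) for ε > 0. Let p > 0 and let (ρ_n)_{n∈ℕ} be a sequence of positive real numbers with ρ_n → 0 as n → ∞. Then there exists a sequence (ε_n)_{n∈ℕ} of numbers with ε_n ∈ (0,1] for every n such that: (i) limsup_{n→∞} (ρ_n^{-1} ε_n²)^p · φ_β(ε_n) ≤ 1; (ii) φ_β(ε_n) → 0 as n → ∞; and (iii) √ρ_n / ε_n → 0 as n → ∞. -/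
/-!
By dominated convergence (with dominating function `ψ^β`) and `F^l {ψ = 0} = 0`, `φ(t) → 0` as
`t → 0`; moreover `φ` is nonnegative and nondecreasing. Pick `δₙ ∈ (0, 1]` with `δₙ → 0` and
`√ρₙ / δₙ → 0` (e.g. `δₙ = min 1 ρₙ^{1/4}`), put `uₙ = max (√ρₙ / δₙ) (φ(δₙ)^{1/(2p)})` and
`εₙ = √ρₙ / uₙ`. Then `uₙ → 0`, `εₙ ≤ δₙ`, `√ρₙ / εₙ = uₙ` and `ρₙ⁻¹ εₙ² = uₙ⁻²`, while
`φ(εₙ) ≤ φ(δₙ) ≤ uₙ^{2p}`, so that `(ρₙ⁻¹ εₙ²)^p φ(εₙ) ≤ 1`.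
-/

open MeasureTheory Filter Topology

section SublevelIntegral

variable {E : Type*} [MeasurableSpace E] {μ : Measure E} {f g : E → ℝ}

theorem monotone_setIntegral_sublevel (hg : Integrable g μ) (hg0 : 0 ≤ g) :
    Monotone fun t => ∫ x in {x | f x ≤ t}, g x ∂μ := fun _ _ hst =>
  setIntegral_mono_set hg.integrableOn (.of_forall hg0)
    (.of_forall fun _ hx => le_trans hx hst)

theorem tendsto_setIntegral_sublevel_nhds_zero (hf : Measurable f) (hg : Integrable g μ)
    (hf_pos : ∀ᵐ x ∂μ, 0 < f x) :
    Tendsto (fun t => ∫ x in {x | f x ≤ t}, g x ∂μ) (𝓝 0) (𝓝 0) := by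
  have hlim := tendsto_integral_filter_of_dominated_convergence (l := 𝓝 (0 : ℝ)) (μ := μ)
    (F := fun t => {x | f x ≤ t}.indicator g) (f := 0) (fun x => ‖g x‖)
    (.of_forall fun _ => hg.aestronglyMeasurable.indicator (hf measurableSet_Iic))
    (.of_forall fun _ => .of_forall fun _ => norm_indicator_le_norm_self _ _) hg.norm ?_
  · simp only [Pi.zero_apply, integral_zero] at hlim
    exact hlim.congr fun t => integral_indicator (hf measurableSet_Iic)
  filter_upwards [hf_pos] with x hx
  refine tendsto_const_nhds.congr' ?_
  filter_upwards [Iio_mem_nhds hx] with t (ht : t < f x)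
  exact (Set.indicator_of_notMem (s := {y | f y ≤ t}) (not_le.2 ht) g).symm

end SublevelIntegral

section TruncationLevels

variable {ρ : ℕ → ℝ}

theorem exists_seq_sqrt_div_tendsto_zero (hρ_pos : ∀ n, 0 < ρ n)
    (hρ : Tendsto ρ atTop (𝓝 0)) :
    ∃ δ : ℕ → ℝ, (∀ n, δ n ∈ Set.Ioc 0 1) ∧ Tendsto δ atTop (𝓝 0) ∧
      Tendsto (fun n => √(ρ n) / δ n) atTop (𝓝 0) := by
  have hroot : Tendsto (fun n => √√(ρ n)) atTop (𝓝 0) := by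
    simpa using hρ.sqrt.sqrt
  refine ⟨fun n => min 1 √√(ρ n), fun n =>
    ⟨lt_min one_pos (Real.sqrt_pos.2 (Real.sqrt_pos.2 (hρ_pos n))), min_le_left _ _⟩,
    by simpa using (tendsto_const_nhds (x := (1 : ℝ))).min hroot, hroot.congr' ?_⟩
  filter_upwards [hroot.eventually_le_const one_pos] with n hn
  rw [min_eq_right hn, Real.div_sqrt]

theorem exists_truncation_levels {φ : ℝ → ℝ} (hφ0 : ∀ t, 0 ≤ φ t) (hφ_mono : Monotone φ)
    (hφ_lim : Tendsto φ (𝓝[>] 0) (𝓝 0)) {p : ℝ} (hp : 0 < p) (hρ_pos : ∀ n, 0 < ρ n)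
    (hρ : Tendsto ρ atTop (𝓝 0)) :
    ∃ ε : ℕ → ℝ, (∀ n, ε n ∈ Set.Ioc (0:ℝ) 1) ∧
      limsup (fun n => ((ρ n)⁻¹ * (ε n) ^ 2) ^ p * φ (ε n)) atTop ≤ 1 ∧
      Tendsto (fun n => φ (ε n)) atTop (𝓝 0) ∧
      Tendsto (fun n => √(ρ n) / ε n) atTop (𝓝 0) := by
  obtain ⟨δ, hδ, hδ0, hρδ⟩ := exists_seq_sqrt_div_tendsto_zero hρ_pos hρ
  have hφδ : Tendsto (fun n => φ (δ n)) atTop (𝓝 0) :=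
    hφ_lim.comp (tendsto_nhdsWithin_of_tendsto_nhds_of_eventually_within _ hδ0
      (.of_forall fun n => (hδ n).1))
  set w := fun n => φ (δ n) ^ p⁻¹
  have hw : Tendsto w atTop (𝓝 0) := by
    simpa [w, Real.zero_rpow (inv_pos.2 hp).ne'] using
      hφδ.rpow_const (p := p⁻¹) (.inr (inv_pos.2 hp).le)
  set u := fun n => max (√(ρ n) / δ n) √(w n)
  have hsqrtρ : ∀ n, 0 < √(ρ n) := fun n => Real.sqrt_pos.2 (hρ_pos n)
  have hu_pos : ∀ n, 0 < u n := fun n => lt_max_of_lt_left (div_pos (hsqrtρ n) (hδ n).1)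
  set ε := fun n => √(ρ n) / u n
  have hε_pos : ∀ n, 0 < ε n := fun n => div_pos (hsqrtρ n) (hu_pos n)
  have hεδ : ∀ n, ε n ≤ δ n := fun n =>
    (div_le_iff₀ (hu_pos n)).2 ((div_le_iff₀' (hδ n).1).1 (le_max_left _ _))
  have hφε : ∀ n, φ (ε n) ≤ (u n ^ 2) ^ p := fun n => calc
    φ (ε n) ≤ φ (δ n) := hφ_mono (hεδ n)
    _ = w n ^ p := by rw [← Real.rpow_mul (hφ0 _), inv_mul_cancel₀ hp.ne', Real.rpow_one]
    _ ≤ (u n ^ 2) ^ p := by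
      gcongr
      · exact Real.rpow_nonneg (hφ0 _) _
      · exact (Real.sqrt_le_iff.1 (le_max_right _ _)).2
  have hε_sq : ∀ n, (ρ n)⁻¹ * ε n ^ 2 = (u n ^ 2)⁻¹ := fun n => by
    rw [div_pow, Real.sq_sqrt (hρ_pos n).le, inv_mul_eq_div, div_div_cancel_left' (hρ_pos n).ne']
  refine ⟨ε, fun n => ⟨hε_pos n, (hεδ n).trans (hδ n).2⟩, ?_, ?_, ?_⟩
  · refine limsup_le_of_le (isCoboundedUnder_le_of_le atTop (x := 0) fun n =>
      mul_nonneg (by rw [hε_sq]; positivity) (hφ0 _)) (.of_forall fun n => ?_)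
    calc ((ρ n)⁻¹ * ε n ^ 2) ^ p * φ (ε n) ≤ ((u n ^ 2)⁻¹) ^ p * (u n ^ 2) ^ p := by
          rw [hε_sq]; gcongr; exact hφε n
      _ = 1 := by rw [← Real.mul_rpow (by positivity) (by positivity),
          inv_mul_cancel₀ (pow_pos (hu_pos n) 2).ne', Real.one_rpow]
  · exact squeeze_zero (fun n => hφ0 _) (fun n => hφ_mono (hεδ n)) hφδ
  · have hu : Tendsto u atTop (𝓝 0) := by simpa using hρδ.max hw.sqrt
    exact hu.congr fun n => (div_div_cancel₀ (hsqrtρ n).ne').symm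

end TruncationLevels

theorem stmt0_general
    {E : Type*} [MeasurableSpace E] (F : Fin 2 → Measure E)
    (β : ℝ)
    (ψ : E → ℝ) (hψmeas : Measurable ψ) (hψnonneg : ∀ x, 0 ≤ ψ x)
    (hint : ∀ l, Integrable (fun x => ψ x ^ β) (F l))
    (hzero : ∀ l, F l {x | ψ x = 0} = 0)
    (φ : ℝ → ℝ)
    (hφ : ∀ ε, φ ε = ∑ l : Fin 2, ∫ x in {x | ψ x ≤ ε}, ψ x ^ β ∂(F l))
    (p : ℝ) (hp : 0 < p)
    (ρ : ℕ → ℝ) (hρpos : ∀ n, 0 < ρ n)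
    (hρ : Tendsto ρ atTop (𝓝 0)) :
    ∃ ε : ℕ → ℝ, (∀ n, ε n ∈ Set.Ioc (0:ℝ) 1) ∧
      Filter.limsup (fun n => ((ρ n)⁻¹ * (ε n) ^ 2) ^ p * φ (ε n)) atTop ≤ 1 ∧
      Tendsto (fun n => φ (ε n)) atTop (𝓝 0) ∧
      Tendsto (fun n => Real.sqrt (ρ n) / ε n) atTop (𝓝 0) := by
  have hψβ : 0 ≤ fun x => ψ x ^ β := fun x => Real.rpow_nonneg (hψnonneg x) β
  have hψ_pos : ∀ l, ∀ᵐ x ∂F l, 0 < ψ x := fun l =>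
    ae_iff.2 <| measure_mono_null (fun x hx => le_antisymm (not_lt.1 hx) (hψnonneg x)) (hzero l)
  have hφ0 : ∀ t, 0 ≤ φ t := fun t => by
    rw [hφ]; exact Finset.sum_nonneg fun l _ => integral_nonneg hψβ
  have hφ_mono : Monotone φ := fun s t hst => by
    simp only [hφ]
    exact Finset.sum_le_sum fun l _ => monotone_setIntegral_sublevel (hint l) hψβ hst
  have hφ_lim : Tendsto φ (𝓝 0) (𝓝 0) := by
    have := tendsto_finsetSum Finset.univ fun l _ =>
      tendsto_setIntegral_sublevel_nhds_zero hψmeas (hint l) (hψ_pos l)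
    simpa only [← hφ, Finset.sum_const_zero] using this
  exact exists_truncation_levels hφ0 hφ_mono (hφ_lim.mono_left nhdsWithin_le_nhds) hp hρpos hρ

/-- Lemma `epsspecify`: choice of a truncation level sequence. -/
theorem stmt0
    {E : Type*} [MeasurableSpace E] (F : Fin 2 → Measure E)
    (hσfin : ∀ l, SigmaFinite (F l))
    (β : ℝ) (hβ : β ∈ Set.Icc (0:ℝ) 2)
    (ψ : E → ℝ) (hψmeas : Measurable ψ) (hψnonneg : ∀ x, 0 ≤ ψ x)
    (hint : ∀ l, Integrable (fun x => ψ x ^ β) (F l))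
    (hzero : ∀ l, F l {x | ψ x = 0} = 0)
    (φ : ℝ → ℝ)
    (hφ : ∀ ε, φ ε = ∑ l : Fin 2, ∫ x in {x | ψ x ≤ ε}, ψ x ^ β ∂(F l))
    (p : ℝ) (hp : 0 < p)
    (ρ : ℕ → ℝ) (hρpos : ∀ n, 0 < ρ n)
    (hρ : Tendsto ρ atTop (𝓝 0)) :
    ∃ ε : ℕ → ℝ, (∀ n, ε n ∈ Set.Ioc (0:ℝ) 1) ∧
      Filter.limsup (fun n => ((ρ n)⁻¹ * (ε n) ^ 2) ^ p * φ (ε n)) atTop ≤ 1 ∧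
      Tendsto (fun n => φ (ε n)) atTop (𝓝 0) ∧
      Tendsto (fun n => Real.sqrt (ρ n) / ε n) atTop (𝓝 0) :=
  stmt0_general F β ψ hψmeas hψnonneg hint hzero φ hφ p hp ρ hρpos hρ
end

section
/- Let Ω be a measurable space equipped with a filtration (F_t)_{t∈[0,∞)}, let δ > 0, and define the delayed filtration G_t := F_{(t−δ)₊} for t ≥ 0 (where (x)₊ = max(x,0)). Let σ be a stopping time with respect to (F_t), let ρ be a stopping time with respect to (G_t), let B be an event belonging to the σ-algebra G_ρ of events prior to ρ (with respect to the filtration G) such that B ⊆ {ρ ≤ σ + δ}, and let H : Ω → ℝ be a G_ρ-measurable random variable. Then the random variable H · 1_B is measurable with respect to the σ-algebra F_σ of events prior to σ (with respect to the filtration F). -/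
open MeasureTheory
open scoped NNReal

/-! On `B ∩ {σ ≤ u}` one has `ρ ≤ u + δ`, and `G_{u+δ} = F_u`; hence every `G_ρ`-measurable subset
of `B` is `F_σ`-measurable. The preimages under `H · 1_B` are such subsets, possibly joined with
`Bᶜ`. -/

theorem Measurable.indicator_of_forall_subset {Ω β : Type*} [Zero β] [MeasurableSpace β]
    {m₁ m₂ : MeasurableSpace Ω} {B : Set Ω} {H : Ω → β} (hB : MeasurableSet[m₁] B)
    (hsub : ∀ A, MeasurableSet[m₁] A → A ⊆ B → MeasurableSet[m₂] A) (hH : Measurable[m₁] H) :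
    Measurable[m₂] (B.indicator H) := by
  intro t ht
  rw [Set.indicator_preimage, Set.ite]
  exact (hsub _ ((hH ht).inter hB) Set.inter_subset_right).union
    ((measurable_zero ht).diff (hsub B hB subset_rfl))

theorem MeasureTheory.IsStoppingTime.measurableSet_of_subset_setOf_le_add {Ω ι : Type*}
    {m : MeasurableSpace Ω} [Preorder ι] [Add ι] [AddRightMono ι] [Sub ι] [OrderedSub ι] {F G : Filtration ι m} {δ : ι}
    (hG : ∀ t, G t ≤ F (t - δ)) {σ ρ : Ω → WithTop ι} (hσ : IsStoppingTime F σ)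
    (hρ : IsStoppingTime G ρ) {A : Set Ω} (hA : MeasurableSet[hρ.measurableSpace] A)
    (hA_le : A ⊆ {ω | ρ ω ≤ σ ω + δ}) : MeasurableSet[hσ.measurableSpace] A := by
  refine ⟨iSup_le (fun t => (hG t).trans (le_iSup (fun s => (F s : MeasurableSpace Ω)) _)) _ hA.1,
    fun u => ?_⟩
  have hA_u : A ∩ {ω | σ ω ≤ u} = (A ∩ {ω | ρ ω ≤ ↑(u + δ)}) ∩ {ω | σ ω ≤ u} := by
    ext ω
    simp only [Set.mem_inter_iff, Set.mem_ofPred_eq]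
    refine ⟨fun ⟨hωA, hωσ⟩ => ⟨⟨hωA, ?_⟩, hωσ⟩, fun ⟨⟨hωA, _⟩, hωσ⟩ => ⟨hωA, hωσ⟩⟩
    calc ρ ω ≤ σ ω + δ := hA_le hωA
      _ ≤ u + δ := by gcongr
      _ = ↑(u + δ) := (WithTop.coe_add u δ).symm
  have hF_u : MeasurableSet[F u] (A ∩ {ω | ρ ω ≤ ↑(u + δ)}) :=
    ((hG (u + δ)).trans (F.mono add_tsub_le_right)) _ (hA.2 (u + δ))
  rw [hA_u]
  exact hF_u.inter (hσ u)

theorem stmt3_general {Ω : Type*} {m : MeasurableSpace Ω}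
    (F : Filtration ℝ≥0 m) (δ : ℝ≥0)
    (G : Filtration ℝ≥0 m) (hG : ∀ t, G t = F (t - δ))
    (σ ρ : Ω → ℝ≥0) (hσ : IsStoppingTime F (fun ω => (σ ω : WithTop ℝ≥0)))
    (hρ : IsStoppingTime G (fun ω => (ρ ω : WithTop ℝ≥0)))
    (B : Set Ω) (hB : MeasurableSet[hρ.measurableSpace] B)
    (hBsub : B ⊆ {ω | ρ ω ≤ σ ω + δ})
    (H : Ω → ℝ) (hH : Measurable[hρ.measurableSpace] H) :
    Measurable[hσ.measurableSpace] (B.indicator H) := by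
  refine hH.indicator_of_forall_subset hB fun A hA hAB => ?_
  refine hσ.measurableSet_of_subset_setOf_le_add (fun t => (hG t).le) hρ hA fun ω hω => ?_
  exact_mod_cast hBsub (hAB hω)

/-- Abstract form of Lemma `barKssp`: measurability, with respect to the σ-algebra of events
prior to an `F`-stopping time `σ`, of `H · 1_B` for `H` measurable with respect to events prior
to a stopping time `ρ` of the delayed filtration `G_t = F_{(t-δ)₊}`, when `B ⊆ {ρ ≤ σ + δ}`. -/
theorem stmt3 {Ω : Type*} {m : MeasurableSpace Ω}
    (F : Filtration ℝ≥0 m) (δ : ℝ≥0) (hδ : 0 < δ)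
    (G : Filtration ℝ≥0 m) (hG : ∀ t, G t = F (t - δ))
    (σ ρ : Ω → ℝ≥0) (hσ : IsStoppingTime F (fun ω => (σ ω : WithTop ℝ≥0)))
    (hρ : IsStoppingTime G (fun ω => (ρ ω : WithTop ℝ≥0)))
    (B : Set Ω) (hB : MeasurableSet[hρ.measurableSpace] B)
    (hBsub : B ⊆ {ω | ρ ω ≤ σ ω + δ})
    (H : Ω → ℝ) (hH : Measurable[hρ.measurableSpace] H) :
    Measurable[hσ.measurableSpace] (B.indicator H) :=
  stmt3_general F δ G hG σ ρ hσ hρ B hB hBsub H hH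
end
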